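/- arXiv:2408.08758 — 4 statements merged into one kernel-verified Lean document; each statement's English description precedes it below -/
import Mathlib

section
/- A commutative ring R with identity has only finitely many maximal ideals if and only if its Anderson ring R[X]_A has only finitely many maximal ideals. -/
open Polynomial

/-- The multiplicative set `A = {f ∈ R[X] : f(0) = 1}` of polynomials
with constant term `1`. -/
def andersonSubmonoid (R : Type*) [CommRing R] : Submonoid (Polynomial R) where
  carrier := {f | f.coeff 0 = 1}
  one_mem' := by simp
  mul_mem' := by
    intro a b ha hb
    simp only [Set.mem_setOf_eq, Polynomial.mul_coeff_zero] at *
    rw [ha, hb, mul_one]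

/-- The Anderson ring `R[X]_A`, the localization of `R[X]` at `A`. -/
abbrev AndersonRing (R : Type*) [CommRing R] := Localization (andersonSubmonoid R)

/-- The canonical ring homomorphism `R → R[X]_A`. -/
noncomputable def andersonMap (R : Type*) [CommRing R] : R →+* AndersonRing R :=
  (algebraMap (Polynomial R) (AndersonRing R)).comp Polynomial.C

/-!
Evaluation at `0` sends `A` to `1`, so it factors through a surjection `R[X]_A → R`. Its kernel
lies in the Jacobson radical: if `z = p / a` with `p(0) = 0`, then `z + 1 = (p + a) / a` and
`p + a ∈ A`. A surjective ring map whose kernel lies in the Jacobson radical pulls maximal ideals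
back bijectively onto maximal ideals, since every maximal ideal contains the kernel.
-/

namespace Ideal

variable {A B : Type*} [CommRing A] [CommRing B] {f : A →+* B}

theorem image_comap_setOf_isMaximal_of_ker_le_jacobson (hf : Function.Surjective f)
    (hker : RingHom.ker f ≤ jacobson ⊥) :
    comap f '' {M : Ideal B | M.IsMaximal} = {m : Ideal A | m.IsMaximal} := by
  ext m
  refine ⟨?_, fun hm => ?_⟩
  · rintro ⟨M, hM, rfl⟩
    exact comap_isMaximal_of_surjective f hf (H := hM)
  have hm_eq : comap f (map f m) = m := by
    rw [comap_map_of_surjective' f hf, sup_eq_left]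
    exact hker.trans (sInf_le ⟨bot_le, hm⟩)
  refine ⟨map f m, ?_, hm_eq⟩
  refine (map_eq_top_or_isMaximal_of_surjective f hf hm).resolve_left fun htop => ?_
  exact hm.ne_top (by rw [← hm_eq, htop, comap_top])

theorem finite_setOf_isMaximal_iff_of_ker_le_jacobson (hf : Function.Surjective f)
    (hker : RingHom.ker f ≤ jacobson ⊥) :
    {M : Ideal B | M.IsMaximal}.Finite ↔ {m : Ideal A | m.IsMaximal}.Finite := by
  rw [← image_comap_setOf_isMaximal_of_ker_le_jacobson hf hker,
    Set.finite_image_iff (comap_injective_of_surjective f hf).injOn]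

end Ideal

namespace AndersonRing

variable (R : Type*) [CommRing R]

noncomputable def evalZero : AndersonRing R →+* R :=
  IsLocalization.lift (M := andersonSubmonoid R) (g := Polynomial.constantCoeff) fun a => by
    rw [Polynomial.constantCoeff_apply, a.2]
    exact isUnit_one

variable {R}

@[simp]
theorem evalZero_algebraMap (p : R[X]) :
    evalZero R (algebraMap R[X] (AndersonRing R) p) = p.coeff 0 :=
  IsLocalization.lift_eq _ p

theorem evalZero_andersonMap (r : R) : evalZero R (andersonMap R r) = r := by
  simp [andersonMap]

theorem evalZero_surjective : Function.Surjective (evalZero R) :=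
  Function.LeftInverse.surjective evalZero_andersonMap

theorem isUnit_add_one_of_evalZero_eq_zero {z : AndersonRing R} (hz : evalZero R z = 0) :
    IsUnit (z + 1) := by
  obtain ⟨⟨p, a⟩, rfl⟩ := IsLocalization.mk'_surjective (andersonSubmonoid R) z
  have ha : (a : R[X]).coeff 0 = 1 := a.2
  have hp : p.coeff 0 = 0 := by
    have := congrArg (evalZero R) (IsLocalization.mk'_spec (AndersonRing R) p a)
    rwa [map_mul, hz, zero_mul, evalZero_algebraMap, eq_comm] at this
  have hpa : p + a ∈ andersonSubmonoid R := by
    show (p + a).coeff 0 = 1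
    rw [coeff_add, hp, ha, zero_add]
  have hmul : (IsLocalization.mk' (AndersonRing R) p a + 1) * algebraMap R[X] _ a =
      algebraMap R[X] _ (p + a) := by
    rw [add_mul, IsLocalization.mk'_spec, one_mul, map_add]
  exact isUnit_of_mul_isUnit_left
    (hmul ▸ IsLocalization.map_units (AndersonRing R) ⟨p + a, hpa⟩)

theorem ker_evalZero_le_jacobson : RingHom.ker (evalZero R) ≤ Ideal.jacobson ⊥ := by
  intro z hz
  refine Ideal.mem_jacobson_bot.mpr fun y => isUnit_add_one_of_evalZero_eq_zero ?_
  rw [map_mul, RingHom.mem_ker.mp hz, zero_mul]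

end AndersonRing

/-- `R` has only finitely many maximal ideals iff its Anderson ring `R[X]_A`
has only finitely many maximal ideals. -/
theorem anderson_finitely_many_maximal_ideals (R : Type*) [CommRing R] :
    {M : Ideal R | M.IsMaximal}.Finite ↔
      {m : Ideal (AndersonRing R) | m.IsMaximal}.Finite :=
  Ideal.finite_setOf_isMaximal_iff_of_ker_le_jacobson AndersonRing.evalZero_surjective
    AndersonRing.ker_evalZero_le_jacobson
end

section
/- A polynomial f ∈ R[X] maps to a unit of the Anderson ring R[X]_A under the canonical localization map R[X] → R[X]_A if and only if the constant term f(0) is a unit of R. Equivalently, the saturation of the multiplicative set A is exactly the set of polynomials over R whose constant term is a unit in R. -/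
open Polynomial

theorem mem_andersonSubmonoid {R : Type*} [CommRing R] {f : R[X]} :
    f ∈ andersonSubmonoid R ↔ f.coeff 0 = 1 :=
  Iff.rfl

theorem exists_mem_andersonSubmonoid_dvd_iff {R : Type*} [CommRing R] {f : R[X]} :
    (∃ m ∈ andersonSubmonoid R, f ∣ m) ↔ IsUnit (f.coeff 0) := by
  constructor
  · rintro ⟨m, hm, hfm⟩
    -- `constantCoeff` is a ring hom, so `f(0) ∣ m(0) = 1`.
    exact isUnit_of_dvd_one (mem_andersonSubmonoid.mp hm ▸ map_dvd constantCoeff hfm)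
  · rintro ⟨u, hu⟩
    refine ⟨f * C ↑u⁻¹, ?_, dvd_mul_right f _⟩
    rw [mem_andersonSubmonoid, mul_coeff_zero, coeff_C_zero, ← hu, Units.mul_inv]

/-- A polynomial `f ∈ R[X]` becomes a unit in the Anderson ring `R[X]_A` iff
its constant term `f(0)` is a unit in `R`; i.e. the saturation of `A` is the
set of polynomials whose constant term is a unit. -/
theorem anderson_isUnit_iff (R : Type*) [CommRing R] (f : Polynomial R) :
    IsUnit (algebraMap (Polynomial R) (AndersonRing R) f) ↔ IsUnit (f.coeff 0) :=
  (IsLocalization.algebraMap_isUnit_iff (andersonSubmonoid R)).trans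
    exists_mem_andersonSubmonoid_dvd_iff
end

section
/- If the Anderson ring R[X]_A is a principal ideal ring of Krull dimension 1, then R is a principal ideal ring of Krull dimension 0. -/
open Polynomial

/-!
Evaluation at `0` extends to a surjection `R[X]_A → R`, since every denominator in `A` is sent
to `1`. Its kernel contains `X`, which stays a non-zero-divisor in the localization, so
`dim R + 1 ≤ dim R[X]_A = 1`. Principality passes to the quotient `R`.
-/

open scoped nonZeroDivisors

section

variable (R : Type*) [CommRing R]

noncomputable def andersonConstantCoeff : AndersonRing R →+* R :=
  IsLocalization.lift (M := andersonSubmonoid R) (g := constantCoeff) fun f => by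
    rw [show constantCoeff (f : R[X]) = 1 from f.2]
    exact isUnit_one

@[simp]
lemma andersonConstantCoeff_algebraMap (f : R[X]) :
    andersonConstantCoeff R (algebraMap R[X] (AndersonRing R) f) = f.coeff 0 :=
  IsLocalization.lift_eq _ f

lemma andersonConstantCoeff_surjective : Function.Surjective (andersonConstantCoeff R) :=
  fun r => ⟨andersonMap R r, by simp [andersonMap]⟩

lemma algebraMap_X_mem_nonZeroDivisors_andersonRing :
    algebraMap R[X] (AndersonRing R) X ∈ (AndersonRing R)⁰ :=
  IsLocalization.map_nonZeroDivisors_le (andersonSubmonoid R) (AndersonRing R)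
    (Submonoid.mem_map_of_mem _ X_mem_nonzeroDivisors)

lemma ringKrullDim_succ_le_ringKrullDim_andersonRing :
    ringKrullDim R + 1 ≤ ringKrullDim (AndersonRing R) :=
  ringKrullDim_succ_le_of_surjective (andersonConstantCoeff R)
    (andersonConstantCoeff_surjective R) (algebraMap_X_mem_nonZeroDivisors_andersonRing R)
    (by simp)

end

/-- If the Anderson ring `R[X]_A` is a one-dimensional principal ideal ring,
then `R` is a zero-dimensional principal ideal ring. -/
theorem anderson_pir_dim_one (R : Type*) [CommRing R]
    (h1 : IsPrincipalIdealRing (AndersonRing R))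
    (h2 : ringKrullDim (AndersonRing R) = 1) :
    IsPrincipalIdealRing R ∧ ringKrullDim R = 0 := by
  refine ⟨.of_surjective _ (andersonConstantCoeff_surjective R), ?_⟩
  have : Nontrivial (AndersonRing R) := by
    by_contra h
    rw [not_nontrivial_iff_subsingleton] at h
    simp [ringKrullDim_eq_bot_of_subsingleton] at h2
  have : Nontrivial R := (andersonMap R).domain_nontrivial
  have hle : ringKrullDim R + 1 ≤ 0 + 1 := by
    simpa [h2] using ringKrullDim_succ_le_ringKrullDim_andersonRing R
  exact le_antisymm (ENat.WithBot.add_le_add_one_right_iff.mp hle)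
    ringKrullDim_nonneg_of_nontrivial
end

section
/- A commutative ring R with identity is von Neumann regular if and only if its Anderson ring R[X]_A is semi-hereditary, i.e., every finitely generated ideal of R[X]_A is projective as an R[X]_A-module. -/
open Polynomial

/-!
If `a ^ 2 * b = a`, then `e = a * b` is an idempotent with `a * e = a` and `a + 1 - e` a unit.
Writing `f = f(0) + X * f'` and using that polynomials with unit constant term are invertible
in `R[X]_A`, a von Neumann regular `R` makes `f` associated to `e + (1 - e) * X * f'`. By
induction on the degree, every element of `R[X]_A` is associated to a *special* element
`e₀ + (1 - e₀) X (e₁ + (1 - e₁) X (⋯))` with idempotents `eᵢ`. As `X` is a nonzerodivisor, the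
annihilator of a special element is generated by an idempotent, so the principal ideal it
generates is projective; and two special elements generate the same ideal as a single special
one, so every finitely generated ideal is such a principal ideal.

Conversely, if `(a, X)` is projective, a splitting of `(u, v) ↦ u * a + v * X` shows
`a * X ∈ (a², X²)`. Mapping `R[X]_A` to the dual numbers `R[ε]` by `X ↦ ε` and reading off the
coefficient of `ε` gives `a ∈ a² R`.
-/

section Projective

variable {S : Type*} [CommRing S]

theorem projective_quotient_span_singleton_of_isIdempotentElem {c : S}
    (hc : IsIdempotentElem c) : Module.Projective S (S ⧸ Ideal.span {c}) := by
  have hle : Ideal.span {c} ≤ LinearMap.ker (LinearMap.mulRight S (1 - c)) := by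
    rw [Ideal.span_le, Set.singleton_subset_iff, SetLike.mem_coe, LinearMap.mem_ker,
      LinearMap.mulRight_apply, mul_sub, mul_one, hc.eq, sub_self]
  refine .of_split ((Ideal.span {c}).liftQ _ hle) (Ideal.span {c}).mkQ ?_
  ext
  simp only [LinearMap.comp_apply, Submodule.mkQ_apply, Submodule.liftQ_apply,
    LinearMap.mulRight_apply, LinearMap.id_apply, one_mul]
  rw [Submodule.Quotient.eq, Ideal.mem_span_singleton']
  exact ⟨-1, by ring⟩

theorem projective_span_singleton_of_torsionOf_eq {w c : S} (hc : IsIdempotentElem c)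
    (hw : Ideal.torsionOf S S w = Ideal.span {c}) :
    Module.Projective S (Ideal.span {w}) := by
  have := projective_quotient_span_singleton_of_isIdempotentElem hc
  rw [← hw] at this
  exact .of_equiv (Ideal.quotTorsionOfEquivSpanSingleton S S w)

theorem exists_mul_eq_of_projective_span_pair {a b : S}
    [Module.Projective S (Ideal.span {a, b})] : ∃ y z : S, a * b = y * a ^ 2 + z * b ^ 2 := by
  set I := Ideal.span {a, b}
  have ha : a ∈ I := Ideal.subset_span (by simp)
  have hb : b ∈ I := Ideal.subset_span (by simp)
  let φ : (S × S) →ₗ[S] I := LinearMap.codRestrict (I.restrictScalars S)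
    ((LinearMap.toSpanSingleton S S a).coprod (LinearMap.toSpanSingleton S S b))
    fun p ↦ Ideal.mem_span_pair.2 ⟨p.1, p.2, rfl⟩
  obtain ⟨σ, hσ⟩ := φ.exists_rightInverse_of_surjective <|
    LinearMap.range_eq_top.2 fun ⟨y, hy⟩ ↦
      let ⟨u, v, h⟩ := Ideal.mem_span_pair.1 hy; ⟨(u, v), Subtype.ext h⟩
  have hσa : (σ ⟨a, ha⟩).1 * a + (σ ⟨a, ha⟩).2 * b = a :=
    congrArg Subtype.val (LinearMap.congr_fun hσ ⟨a, ha⟩)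
  -- `b • a = a • b` in `I`, and `σ` is linear
  have hlin : b * (σ ⟨a, ha⟩).1 = a * (σ ⟨b, hb⟩).1 := by
    have : b • (⟨a, ha⟩ : I) = a • ⟨b, hb⟩ := Subtype.ext (mul_comm b a)
    simpa only [map_smul, Prod.smul_fst, smul_eq_mul] using congrArg (fun p ↦ (σ p).1) this
  exact ⟨(σ ⟨b, hb⟩).1, (σ ⟨a, ha⟩).2, by linear_combination -b * hσa + a * hlin⟩

end Projective

section Special

variable {S : Type*} [CommRing S]

theorem exists_isIdempotentElem_mul_eq_isUnit_add_one_sub {a : S} (h : ∃ b, a ^ 2 * b = a) :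
    ∃ e, IsIdempotentElem e ∧ a * e = a ∧ IsUnit (a + 1 - e) := by
  obtain ⟨b, hb⟩ := h
  refine ⟨a * b, by unfold IsIdempotentElem; linear_combination b * hb, by linear_combination hb,
    .of_mul_eq_one (a * b ^ 2 + 1 - a * b) (by grind)⟩

theorem IsIdempotentElem.isUnit_mul_add_one_sub_mul {e u v : S} (he : IsIdempotentElem e)
    (hu : IsUnit u) (hv : IsUnit v) : IsUnit (e * u + (1 - e) * v) := by
  obtain ⟨u, rfl⟩ := hu
  obtain ⟨v, rfl⟩ := hv
  have he := he.eq
  exact .of_mul_eq_one (e * ↑u⁻¹ + (1 - e) * ↑v⁻¹) (by grind [Units.mul_inv])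

inductive IsSpecial (x : S) : S → Prop
  | zero : IsSpecial x 0
  | step {e w : S} : IsIdempotentElem e → IsSpecial x w → IsSpecial x (e + (1 - e) * x * w)

variable {x : S}

theorem IsSpecial.exists_torsionOf_eq (hx : x ∈ nonZeroDivisors S) {w : S}
    (hw : IsSpecial x w) :
    ∃ c : S, IsIdempotentElem c ∧ Ideal.torsionOf S S w = Ideal.span {c} := by
  induction hw with
  | zero => exact ⟨1, .one, by simp⟩
  | @step e w he _ ih =>
    obtain ⟨c, hc, hw⟩ := ih
    refine ⟨(1 - e) * c, he.one_sub.mul hc, ?_⟩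
    simp only [SetLike.ext_iff, Ideal.mem_torsionOf_iff, smul_eq_mul,
      Ideal.mem_span_singleton'] at hw ⊢
    intro z
    constructor
    · intro hz
      -- `e` kills the second summand, so `z * e = 0`, and then `x` can be cancelled
      have hez : z * e = 0 := by linear_combination e * hz - z * (1 - x * w) * he.eq
      have : (1 - e) * z * w * x = 0 := by linear_combination hz - hez
      obtain ⟨a, ha⟩ := (hw _).1 ((mul_right_mem_nonZeroDivisors_eq_zero_iff hx).1 this)
      exact ⟨a, by linear_combination (1 - e) * ha - hez + z * he.eq⟩
    · rintro ⟨a, rfl⟩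
      have hcw : c * w = 0 := (hw c).2 ⟨1, one_mul c⟩
      linear_combination (-a * c) * he.eq + a * (1 - e) ^ 2 * x * hcw

theorem IsSpecial.projective_span_singleton (hx : x ∈ nonZeroDivisors S) {w : S}
    (hw : IsSpecial x w) : Module.Projective S (Ideal.span {w}) :=
  let ⟨_, hc, hwc⟩ := hw.exists_torsionOf_eq hx
  projective_span_singleton_of_torsionOf_eq hc hwc

theorem span_pair_add_one_sub_mul {e d w v u : S} (he : IsIdempotentElem e)
    (hd : IsIdempotentElem d) (h : Ideal.span {w, v} = Ideal.span {u}) :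
    Ideal.span {e + (1 - e) * x * w, d + (1 - d) * x * v} =
      Ideal.span {(e + d - e * d) + (1 - (e + d - e * d)) * x * u} := by
  have he := he.eq
  have hd := hd.eq
  obtain ⟨t, rfl⟩ := Ideal.mem_span_singleton'.1 (h ▸ Ideal.subset_span (by simp) : w ∈ _)
  obtain ⟨t', rfl⟩ := Ideal.mem_span_singleton'.1 (h ▸ Ideal.subset_span (by simp) : v ∈ _)
  obtain ⟨a, b, hab⟩ := Ideal.mem_span_pair.1 (h ▸ Ideal.mem_span_singleton_self u)
  apply le_antisymm
  · rw [Ideal.span_le, Set.insert_subset_iff, Set.singleton_subset_iff]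
    exact ⟨Ideal.mem_span_singleton'.2
        ⟨e + (1 - (e + d - e * d)) * t + (1 - e) * d * x * t * u, by grind⟩,
      Ideal.mem_span_singleton'.2
        ⟨d + (1 - (e + d - e * d)) * t' + (1 - d) * e * x * t' * u, by grind⟩⟩
  · rw [Ideal.span_singleton_le_iff_mem, Ideal.mem_span_pair]
    exact ⟨e + a * (1 - (e + d - e * d)), (1 - e) * d + b * (1 - (e + d - e * d)), by grind⟩

theorem IsSpecial.exists_span_pair_eq {w v : S} (hw : IsSpecial x w) (hv : IsSpecial x v) :
    ∃ u, IsSpecial x u ∧ Ideal.span {w, v} = Ideal.span {u} := by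
  induction hw generalizing v with
  | zero => exact ⟨v, hv, Ideal.span_insert_zero⟩
  | step he hw ih =>
    cases hv with
    | zero => exact ⟨_, .step he hw, Ideal.span_pair_zero _⟩
    | step hd hv =>
      obtain ⟨u, hu, h⟩ := ih hv
      exact ⟨_, .step (he.add_sub_mul hd) hu, span_pair_add_one_sub_mul he hd h⟩

theorem IsSpecial.exists_associated_add_one_sub_mul {e u w y : S} (he : IsIdempotentElem e)
    (hu : IsUnit u) (hw : IsSpecial x w) (hwy : Associated w y) :
    ∃ w', IsSpecial x w' ∧ Associated w' (e * u + (1 - e) * x * y) := by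
  obtain ⟨v, rfl⟩ := hwy
  have hunit := he.isUnit_mul_add_one_sub_mul hu v.isUnit
  have he := he.eq
  exact ⟨_, .step he hw, hunit.unit, by simp only [IsUnit.unit_spec]; grind⟩

theorem exists_isSpecial_span_eq_of_fg (h : ∀ z : S, ∃ w, IsSpecial x w ∧ Associated w z)
    {I : Ideal S} (hI : I.FG) : ∃ w, IsSpecial x w ∧ I = Ideal.span {w} := by
  classical
  obtain ⟨s, rfl⟩ := hI
  induction s using Finset.induction_on with
  | empty => exact ⟨0, .zero, by simp⟩
  | insert z s _ ih =>
    obtain ⟨v, hv, hs⟩ := ih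
    obtain ⟨w, hw, u, rfl⟩ := h z
    obtain ⟨w', hw', h'⟩ := hw.exists_span_pair_eq hv
    refine ⟨w', hw', ?_⟩
    rw [Finset.coe_insert, Ideal.span_insert, hs, Ideal.span_singleton_mul_right_unit u.isUnit,
      ← h', Ideal.span_insert]

end Special

open DualNumber TrivSqZeroExt

theorem DualNumber.fst_aeval_eps {R : Type*} [CommRing R] (f : R[X]) :
    (aeval (ε : R[ε]) f).fst = f.coeff 0 := by
  rw [← fstHom_apply R R R, ← aeval_algHom_apply, fstHom_apply, fst_eps,
    coeff_zero_eq_aeval_zero]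

namespace AndersonRing

variable {R : Type*} [CommRing R]

local notation "ι" => algebraMap R[X] (AndersonRing R)

theorem isUnit_algebraMap_of_isUnit_coeff_zero {f : R[X]} (hf : IsUnit (f.coeff 0)) :
    IsUnit (ι f) := by
  obtain ⟨v, hv⟩ := hf.exists_right_inv
  have hmem : C v * f ∈ andersonSubmonoid R := by
    change (C v * f).coeff 0 = 1
    rw [mul_coeff_zero, coeff_C_zero, mul_comm, hv]
  have hu : IsUnit (ι (C v * f)) := IsLocalization.map_units _ ⟨C v * f, hmem⟩
  rw [map_mul] at hu
  exact isUnit_of_mul_isUnit_right hu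

theorem algebraMap_X_mem_nonZeroDivisors : ι X ∈ nonZeroDivisors (AndersonRing R) :=
  IsLocalization.nonZeroDivisors_le_comap (andersonSubmonoid R) _ X_mem_nonzeroDivisors

theorem exists_isSpecial_associated_of_divX {f : R[X]} {e : R} (he : IsIdempotentElem e)
    (hae : f.coeff 0 * e = f.coeff 0) (hu : IsUnit (f.coeff 0 + 1 - e))
    (h : ∃ w, IsSpecial (ι X) w ∧ Associated w (ι f.divX)) :
    ∃ w, IsSpecial (ι X) w ∧ Associated w (ι f) := by
  have hdecomp : f = C e * (f + 1 - C e) + (1 - C e) * X * f.divX := by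
    have hCe : C e * C e = C e := by rw [← C_mul, he.eq]
    have hCa : C (f.coeff 0) * C e = C (f.coeff 0) := by rw [← C_mul, hae]
    linear_combination hCe - hCa - (1 - C e) * X_mul_divX_add f
  have hU : IsUnit (ι (f + 1 - C e)) := isUnit_algebraMap_of_isUnit_coeff_zero <| by
    simpa only [coeff_sub, coeff_add, coeff_one_zero, coeff_C_zero] using hu
  obtain ⟨w, hw, hwf⟩ := h
  have := congrArg ι hdecomp
  simp only [map_add, map_mul, map_sub, map_one] at this hU
  rw [this]
  exact hw.exists_associated_add_one_sub_mul ((he.map C).map ι) hU hwf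

theorem exists_isSpecial_associated_algebraMap (hR : ∀ a : R, ∃ b : R, a ^ 2 * b = a)
    (f : R[X]) : ∃ w, IsSpecial (ι X) w ∧ Associated w (ι f) := by
  have of_divX (f : R[X]) (h : ∃ w, IsSpecial (ι X) w ∧ Associated w (ι f.divX)) :
      ∃ w, IsSpecial (ι X) w ∧ Associated w (ι f) :=
    let ⟨_, he, hae, hu⟩ := exists_isIdempotentElem_mul_eq_isUnit_add_one_sub (hR (f.coeff 0))
    exists_isSpecial_associated_of_divX he hae hu h
  induction hn : f.natDegree generalizing f with
  | zero =>
    refine of_divX f ⟨0, .zero, ?_⟩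
    rw [divX_eq_zero_iff.2 (eq_C_of_natDegree_eq_zero hn), map_zero]
  | succ n ih => exact of_divX f (ih _ (by rw [natDegree_divX_eq_natDegree_tsub_one, hn]; rfl))

theorem exists_isSpecial_associated (hR : ∀ a : R, ∃ b : R, a ^ 2 * b = a)
    (z : AndersonRing R) : ∃ w, IsSpecial (ι X) w ∧ Associated w z := by
  obtain ⟨⟨f, s⟩, hz⟩ := IsLocalization.surj (andersonSubmonoid R) z
  obtain ⟨w, hw, hwf⟩ := exists_isSpecial_associated_algebraMap hR f
  refine ⟨w, hw, hwf.trans ?_⟩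
  rw [← hz]
  exact (associated_mul_unit_right z _ (IsLocalization.map_units _ s)).symm

noncomputable def toDualNumber : AndersonRing R →+* R[ε] :=
  IsLocalization.lift (M := andersonSubmonoid R) (g := (aeval ε).toRingHom) fun f ↦
    isUnit_iff_isUnit_fst.2 <| by
      rw [AlgHom.toRingHom_eq_coe, RingHom.coe_coe, fst_aeval_eps, f.2]
      exact isUnit_one

theorem toDualNumber_algebraMap (f : R[X]) : toDualNumber (ι f) = aeval ε f :=
  IsLocalization.lift_eq _ _

theorem exists_sq_mul_eq_of_mul_X_eq {a : R} {y z : AndersonRing R}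
    (h : ι (C a) * ι X = y * ι (C a) ^ 2 + z * ι X ^ 2) : ∃ b, a ^ 2 * b = a := by
  refine ⟨(toDualNumber y).snd, ?_⟩
  simpa [toDualNumber_algebraMap, eps_pow_two, algebraMap_eq_inl, mul_comm] using
    (congrArg (fun t ↦ (toDualNumber t).snd) h).symm

end AndersonRing

/-- `R` is von Neumann regular iff the Anderson ring `R[X]_A` is
semi-hereditary (every finitely generated ideal is projective). -/
theorem anderson_vnr_iff_semihereditary (R : Type*) [CommRing R] :
    (∀ a : R, ∃ b : R, a ^ 2 * b = a) ↔
    (∀ I : Ideal (AndersonRing R), I.FG → Module.Projective (AndersonRing R) I) := by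
  constructor
  · intro hR I hI
    obtain ⟨w, hw, rfl⟩ :=
      exists_isSpecial_span_eq_of_fg (AndersonRing.exists_isSpecial_associated hR) hI
    exact hw.projective_span_singleton AndersonRing.algebraMap_X_mem_nonZeroDivisors
  · intro h a
    obtain ⟨y, z, hyz⟩ := @exists_mul_eq_of_projective_span_pair _ _
      (algebraMap R[X] (AndersonRing R) (C a)) (algebraMap R[X] _ X)
      (h _ (Submodule.fg_span (Set.toFinite _)))
    exact AndersonRing.exists_sq_mul_eq_of_mul_X_eq hyz
end
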